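/- Let (Ω, F, P) be a probability space with a filtration (F_k)_{k=0,…,n} such that F₀ is P-trivial, and let (f_k)_{k=0}^n and (g_k)_{k=0}^n be integrable adapted real-valued processes with f_k ≤ g_k almost surely for every k. For stopping times ζ, η with values in {0,…,n} set H(ζ, η) = g_ζ 1_{ζ < η} + f_η 1_{η ≤ ζ}. Define J_n = f_n and, backwards for k = n−1,…,0, J_k = max(f_k, min(g_k, E[J_{k+1} | F_k])). Define η* = min(n, min{k : J_k = f_k}) and ζ* = min(n, min{k : J_k = g_k}) (each equal to n if the corresponding set is empty). Then η* and ζ* are stopping times, and for every pair of stopping times ζ, η with values in {0,…,n}: E[H(ζ*, η)] ≤ E[J₀] ≤ E[H(ζ, η*)]. In particular (ζ*, η*) is a saddle point: η* is an optimal stopping time for the buyer and ζ* is an optimal stopping time for the seller. -/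

import Mathlib

/-!
The value process `J` lies between `f` and (a.s.) `g`. Where `J > f`, that is before `η*`, the
recursion gives `J_k ≤ E[J_{k+1} | F_k]`; where `J < g`, that is before `ζ*`, it gives
`J_k ≥ E[J_{k+1} | F_k]`. Optional stopping at the bounded stopping times `ζ ∧ η*` and `ζ* ∧ η`
therefore yields `E[J(ζ* ∧ η)] ≤ E[J₀] ≤ E[J(ζ ∧ η*)]`, and at these times the payoff is
pointwise below, respectively above, `J`, because `J = g` at `ζ* < n` and `J = f` at `η*`.
-/

open MeasureTheory

noncomputable def firstTimeUpTo (n : ℕ) (P : ℕ → Prop) : ℕ :=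
  sInf ({k | k ≤ n ∧ P k} ∪ {n})

section FirstTime

variable {n k : ℕ} {P : ℕ → Prop}

lemma firstTimeUpTo_le : firstTimeUpTo n P ≤ n :=
  Nat.sInf_le (Or.inr rfl)

lemma firstTimeUpTo_le_of (hk : k ≤ n) (hP : P k) : firstTimeUpTo n P ≤ k :=
  Nat.sInf_le (Or.inl ⟨hk, hP⟩)

lemma firstTimeUpTo_spec : P (firstTimeUpTo n P) ∨ firstTimeUpTo n P = n :=
  (Nat.sInf_mem (s := {k | k ≤ n ∧ P k} ∪ {n}) ⟨n, Or.inr rfl⟩).imp And.right id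

lemma not_of_lt_firstTimeUpTo (h : k < firstTimeUpTo n P) : ¬ P k := fun hP =>
  (firstTimeUpTo_le_of (h.le.trans firstTimeUpTo_le) hP).not_gt h

lemma firstTimeUpTo_le_iff (hk : k < n) : firstTimeUpTo n P ≤ k ↔ ∃ j ≤ k, P j :=
  ⟨fun h => firstTimeUpTo_spec.elim (fun hP => ⟨_, h, hP⟩) (fun he => absurd (he ▸ h) hk.not_ge),
    fun ⟨_, hj, hP⟩ => (firstTimeUpTo_le_of (hj.trans hk.le) hP).trans hj⟩

end FirstTime

section Stopping

variable {Ω : Type*} {m0 : MeasurableSpace Ω} {μ : Measure Ω} {ℱ : Filtration ℕ m0} {n : ℕ}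

lemma isStoppingTime_firstTimeUpTo {P : ℕ → Ω → Prop}
    (hP : ∀ k ≤ n, MeasurableSet[ℱ k] {ω | P k ω}) :
    IsStoppingTime ℱ (fun ω => (firstTimeUpTo n (P · ω) : WithTop ℕ)) := by
  intro k
  simp only [Nat.cast_withTop, WithTop.coe_le_coe]
  rcases le_or_gt n k with hnk | hkn
  · simp [fun ω => (firstTimeUpTo_le (P := (P · ω))).trans hnk]
  · simp_rw [firstTimeUpTo_le_iff hkn, Set.ofPred_exists]
    refine MeasurableSet.iUnion fun j => ?_
    by_cases hj : j ≤ k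
    · simpa [hj] using ℱ.mono hj _ (hP j (hj.trans hkn.le))
    · simp [hj]

lemma measurable_of_isStoppingTime_coe {τ : Ω → ℕ}
    (hτ : IsStoppingTime ℱ (fun ω => (τ ω : WithTop ℕ))) : Measurable τ :=
  measurable_to_countable' fun k => by
    simpa [Set.preimage, Set.ofPred_eq_eq_singleton] using ℱ.le k _ (hτ.measurableSet_eq k)

lemma integrable_stopped_of_le {F : ℕ → Ω → ℝ} (hF : ∀ k ≤ n, Integrable (F k) μ) {τ : Ω → ℕ}
    (hτ : IsStoppingTime ℱ (fun ω => (τ ω : WithTop ℕ))) (hτn : ∀ ω, τ ω ≤ n) :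
    Integrable (fun ω => F (τ ω) ω) μ := by
  have := integrable_stoppedValue ℕ hτ (fun k => hF (min k n) (min_le_right _ _))
    (N := n) (fun ω => WithTop.coe_le_coe.2 (hτn ω))
  convert this using 2 with ω
  change F (τ ω) ω = F (min (τ ω) n) ω
  rw [min_eq_left (hτn ω)]

lemma isStoppingTime_min_coe {σ τ : Ω → ℕ} (hσ : IsStoppingTime ℱ (fun ω => (σ ω : WithTop ℕ)))
    (hτ : IsStoppingTime ℱ (fun ω => (τ ω : WithTop ℕ))) :
    IsStoppingTime ℱ (fun ω => (min (σ ω) (τ ω) : WithTop ℕ)) := by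
  simpa only [Nat.cast_withTop, WithTop.coe_min] using hσ.min hτ

lemma integrable_ite_stopped {F G : ℕ → Ω → ℝ} (hF : ∀ k ≤ n, Integrable (F k) μ)
    (hG : ∀ k ≤ n, Integrable (G k) μ) {σ τ : Ω → ℕ}
    (hσ : IsStoppingTime ℱ (fun ω => (σ ω : WithTop ℕ))) (hσn : ∀ ω, σ ω ≤ n)
    (hτ : IsStoppingTime ℱ (fun ω => (τ ω : WithTop ℕ))) (hτn : ∀ ω, τ ω ≤ n) :
    Integrable (fun ω => if σ ω < τ ω then F (σ ω) ω else G (τ ω) ω) μ :=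
  Integrable.piecewise (s := {ω | σ ω < τ ω})
    (measurableSet_lt (measurable_of_isStoppingTime_coe hσ) (measurable_of_isStoppingTime_coe hτ))
    (integrable_stopped_of_le hF hσ hσn).integrableOn
    (integrable_stopped_of_le hG hτ hτn).integrableOn

end Stopping

section OptionalStopping

variable {Ω : Type*} {m0 : MeasurableSpace Ω} {μ : Measure Ω} [IsFiniteMeasure μ]
  {ℱ : Filtration ℕ m0} {n : ℕ} {X : ℕ → Ω → ℝ} {τ : Ω → ℕ}

lemma setIntegral_le_setIntegral_of_le_condExp {m : MeasurableSpace Ω} (hm : m ≤ m0)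
    {Y Z : Ω → ℝ} {A : Set Ω} (hA : MeasurableSet[m] A) (hY : Integrable Y μ)
    (hZ : Integrable Z μ) (hle : ∀ᵐ ω ∂μ, ω ∈ A → Y ω ≤ μ[Z|m] ω) :
    ∫ ω in A, Y ω ∂μ ≤ ∫ ω in A, Z ω ∂μ := by
  rw [← setIntegral_condExp hm hZ hA]
  exact setIntegral_mono_ae_restrict hY.integrableOn integrable_condExp.integrableOn
    ((ae_restrict_iff' (hm A hA)).2 hle)

lemma integral_stopped_le_integral_stopped_succ (hX : ∀ k ≤ n, Integrable (X k) μ)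
    (hτ : IsStoppingTime ℱ (fun ω => (τ ω : WithTop ℕ))) (hτn : ∀ ω, τ ω ≤ n) {k : ℕ}
    (hk : k < n) (hsub : ∀ᵐ ω ∂μ, k < τ ω → X k ω ≤ μ[X (k + 1)|ℱ k] ω) :
    ∫ ω, X (min (τ ω) k) ω ∂μ ≤ ∫ ω, X (min (τ ω) (k + 1)) ω ∂μ := by
  set A := {ω | k < τ ω}
  have hA : MeasurableSet[ℱ k] A := by
    simpa [A] using hτ.measurableSet_gt k
  have hsplit : (fun ω => X (min (τ ω) (k + 1)) ω)
      = fun ω => X (min (τ ω) k) ω + A.indicator (X (k + 1) - X k) ω := by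
    funext ω
    by_cases h : k < τ ω
    · simp [A, h, min_eq_right h.le]
    · simp [A, h, min_eq_left (not_lt.1 h), min_eq_left ((not_lt.1 h).trans k.le_succ)]
  have hXτk : Integrable (fun ω => X (min (τ ω) k) ω) μ :=
    integrable_stopped_of_le hX (isStoppingTime_min_coe hτ (isStoppingTime_const ℱ k))
      fun ω => (min_le_left _ _).trans (hτn ω)
  have hXk := hX k hk.le
  have hXk1 := hX (k + 1) hk
  rw [hsplit, integral_add hXτk ((hXk1.sub hXk).indicator (ℱ.le k A hA)),
    integral_indicator (ℱ.le k A hA), Pi.sub_def,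
    integral_sub hXk1.integrableOn hXk.integrableOn]
  linarith [setIntegral_le_setIntegral_of_le_condExp (ℱ.le k) hA hXk hXk1 hsub]

theorem integral_le_integral_stopped_of_le_condExp (hX : ∀ k ≤ n, Integrable (X k) μ)
    (hτ : IsStoppingTime ℱ (fun ω => (τ ω : WithTop ℕ))) (hτn : ∀ ω, τ ω ≤ n)
    (hsub : ∀ k < n, ∀ᵐ ω ∂μ, k < τ ω → X k ω ≤ μ[X (k + 1)|ℱ k] ω) :
    ∫ ω, X 0 ω ∂μ ≤ ∫ ω, X (τ ω) ω ∂μ := by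
  have h : ∀ k ≤ n, ∫ ω, X 0 ω ∂μ ≤ ∫ ω, X (min (τ ω) k) ω ∂μ := by
    intro k
    induction k with
    | zero => simp
    | succ k ih =>
      intro hk
      exact (ih (by omega)).trans
        (integral_stopped_le_integral_stopped_succ hX hτ hτn hk (hsub k hk))
  simpa only [min_eq_left (hτn _)] using h n le_rfl

theorem integral_stopped_le_integral_of_condExp_le (hX : ∀ k ≤ n, Integrable (X k) μ)
    (hτ : IsStoppingTime ℱ (fun ω => (τ ω : WithTop ℕ))) (hτn : ∀ ω, τ ω ≤ n)
    (hsup : ∀ k < n, ∀ᵐ ω ∂μ, k < τ ω → μ[X (k + 1)|ℱ k] ω ≤ X k ω) :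
    ∫ ω, X (τ ω) ω ∂μ ≤ ∫ ω, X 0 ω ∂μ := by
  have h := integral_le_integral_stopped_of_le_condExp (X := fun k => -X k)
    (fun k hk => (hX k hk).neg) hτ hτn fun k hk => by
      filter_upwards [hsup k hk, condExp_neg (m := ℱ k) (μ := μ) (X (k + 1))] with ω h hneg hkτ
      simpa [hneg] using h hkτ
  simpa only [Pi.neg_apply, integral_neg, neg_le_neg_iff] using h

end OptionalStopping

structure IsDynkinValue {Ω : Type*} {m0 : MeasurableSpace Ω} (μ : Measure Ω)
    (ℱ : Filtration ℕ m0) (n : ℕ) (f g J : ℕ → Ω → ℝ) : Prop where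
  terminal : J n = f n
  step : ∀ k < n, J k = fun ω => max (f k ω) (min (g k ω) (μ[J (k + 1)|ℱ k] ω))

namespace IsDynkinValue

variable {Ω : Type*} {m0 : MeasurableSpace Ω} {μ : Measure Ω} {ℱ : Filtration ℕ m0} {n k : ℕ}
  {f g J : ℕ → Ω → ℝ}

lemma measurable (hJ : IsDynkinValue μ ℱ n f g J) (hfa : ∀ k, Measurable[ℱ k] (f k))
    (hga : ∀ k, Measurable[ℱ k] (g k)) (hk : k ≤ n) : Measurable[ℱ k] (J k) := by
  rcases hk.lt_or_eq with hk | rfl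
  · rw [hJ.step k hk]
    exact (hfa k).max ((hga k).min stronglyMeasurable_condExp.measurable)
  · exact hJ.terminal ▸ hfa k

lemma integrable (hJ : IsDynkinValue μ ℱ n f g J) (hfi : ∀ k, Integrable (f k) μ)
    (hgi : ∀ k, Integrable (g k) μ) (hk : k ≤ n) : Integrable (J k) μ := by
  rcases hk.lt_or_eq with hk | rfl
  · rw [hJ.step k hk]
    exact (hfi k).sup ((hgi k).inf integrable_condExp)
  · exact hJ.terminal ▸ hfi k

lemma lower_le (hJ : IsDynkinValue μ ℱ n f g J) (hk : k ≤ n) (ω : Ω) : f k ω ≤ J k ω := by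
  rcases hk.lt_or_eq with hk | rfl
  · rw [hJ.step k hk]
    exact le_max_left _ _
  · rw [hJ.terminal]

lemma le_upper (hJ : IsDynkinValue μ ℱ n f g J) (hk : k ≤ n) {ω : Ω} (hfg : f k ω ≤ g k ω) :
    J k ω ≤ g k ω := by
  rcases hk.lt_or_eq with hk | rfl
  · rw [hJ.step k hk]
    exact max_le hfg (min_le_left _ _)
  · rwa [hJ.terminal]

lemma le_condExp_of_ne_lower (hJ : IsDynkinValue μ ℱ n f g J) (hk : k < n) {ω : Ω}
    (hne : J k ω ≠ f k ω) : J k ω ≤ μ[J (k + 1)|ℱ k] ω := by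
  rw [hJ.step k hk] at hne ⊢
  grind

lemma condExp_le_of_ne_upper (hJ : IsDynkinValue μ ℱ n f g J) (hk : k < n) {ω : Ω}
    (hfg : f k ω ≤ g k ω) (hne : J k ω ≠ g k ω) : μ[J (k + 1)|ℱ k] ω ≤ J k ω := by
  rw [hJ.step k hk] at hne ⊢
  grind

variable [IsFiniteMeasure μ]

theorem integral_payoff_le_integral_value (hJ : IsDynkinValue μ ℱ n f g J)
    (hfi : ∀ k, Integrable (f k) μ) (hgi : ∀ k, Integrable (g k) μ)
    (hfg : ∀ k, ∀ᵐ ω ∂μ, f k ω ≤ g k ω)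
    (hζ : IsStoppingTime ℱ (fun ω => ((firstTimeUpTo n fun k => J k ω = g k ω) : WithTop ℕ)))
    {η : Ω → ℕ} (hη : IsStoppingTime ℱ (fun ω => (η ω : WithTop ℕ))) (hηn : ∀ ω, η ω ≤ n) :
    ∫ ω, (if (firstTimeUpTo n fun k => J k ω = g k ω) < η ω
      then g (firstTimeUpTo n fun k => J k ω = g k ω) ω else f (η ω) ω) ∂μ ≤ ∫ ω, J 0 ω ∂μ := by
  set ζ : Ω → ℕ := fun ω => firstTimeUpTo n fun k => J k ω = g k ω
  have hτ := isStoppingTime_min_coe hζ hη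
  have hτn (ω : Ω) : min (ζ ω) (η ω) ≤ n := (min_le_right _ _).trans (hηn ω)
  calc _ ≤ ∫ ω, J (min (ζ ω) (η ω)) ω ∂μ := by
        refine integral_mono (integrable_ite_stopped (fun k _ => hgi k) (fun k _ => hfi k) hζ
          (fun _ => firstTimeUpTo_le) hη hηn)
          (integrable_stopped_of_le (fun k hk => hJ.integrable hfi hgi hk) hτ hτn) fun ω => ?_
        dsimp only
        split_ifs with h
        · rw [min_eq_left h.le]
          exact (firstTimeUpTo_spec.resolve_right (h.trans_le (hηn ω)).ne).ge
        · rw [min_eq_right (not_lt.1 h)]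
          exact hJ.lower_le (hηn ω) ω
    _ ≤ ∫ ω, J 0 ω ∂μ :=
        integral_stopped_le_integral_of_condExp_le (fun k hk => hJ.integrable hfi hgi hk) hτ hτn
          fun k hk => (hfg k).mono fun _ hfgω hkτ => hJ.condExp_le_of_ne_upper hk hfgω
            (not_of_lt_firstTimeUpTo (hkτ.trans_le (min_le_left _ _)))

theorem integral_value_le_integral_payoff (hJ : IsDynkinValue μ ℱ n f g J)
    (hfi : ∀ k, Integrable (f k) μ) (hgi : ∀ k, Integrable (g k) μ)
    (hfg : ∀ k, ∀ᵐ ω ∂μ, f k ω ≤ g k ω)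
    (hη : IsStoppingTime ℱ (fun ω => ((firstTimeUpTo n fun k => J k ω = f k ω) : WithTop ℕ)))
    {ζ : Ω → ℕ} (hζ : IsStoppingTime ℱ (fun ω => (ζ ω : WithTop ℕ))) (hζn : ∀ ω, ζ ω ≤ n) :
    ∫ ω, J 0 ω ∂μ ≤ ∫ ω, (if ζ ω < (firstTimeUpTo n fun k => J k ω = f k ω) then g (ζ ω) ω
      else f (firstTimeUpTo n fun k => J k ω = f k ω) ω) ∂μ := by
  set η : Ω → ℕ := fun ω => firstTimeUpTo n fun k => J k ω = f k ω
  have hτ := isStoppingTime_min_coe hζ hη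
  have hτn (ω : Ω) : min (ζ ω) (η ω) ≤ n := (min_le_left _ _).trans (hζn ω)
  calc ∫ ω, J 0 ω ∂μ ≤ ∫ ω, J (min (ζ ω) (η ω)) ω ∂μ :=
        integral_le_integral_stopped_of_le_condExp (fun k hk => hJ.integrable hfi hgi hk) hτ hτn
          fun k hk => ae_of_all _ fun _ hkτ => hJ.le_condExp_of_ne_lower hk
            (not_of_lt_firstTimeUpTo (hkτ.trans_le (min_le_right _ _)))
    _ ≤ _ := by
        refine integral_mono_ae
          (integrable_stopped_of_le (fun k hk => hJ.integrable hfi hgi hk) hτ hτn)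
          (integrable_ite_stopped (fun k _ => hgi k) (fun k _ => hfi k) hζ hζn hη
            (fun _ => firstTimeUpTo_le)) ?_
        filter_upwards [ae_all_iff.2 hfg] with ω hfgω
        split_ifs with h
        · rw [min_eq_left h.le]
          exact hJ.le_upper (hζn ω) (hfgω _)
        · rw [min_eq_right (not_lt.1 h)]
          exact firstTimeUpTo_spec.elim le_of_eq fun he => by rw [he, hJ.terminal]

end IsDynkinValue

theorem stmt12_general {Ω : Type*} {m0 : MeasurableSpace Ω} (μ : Measure Ω)
    [IsProbabilityMeasure μ]
    (ℱ : Filtration ℕ m0) (n : ℕ)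
    (f g : ℕ → Ω → ℝ)
    (hfa : ∀ k, Measurable[ℱ k] (f k)) (hga : ∀ k, Measurable[ℱ k] (g k))
    (hfi : ∀ k, Integrable (f k) μ) (hgi : ∀ k, Integrable (g k) μ)
    (hfg : ∀ k, ∀ᵐ ω ∂μ, f k ω ≤ g k ω)
    (J : ℕ → Ω → ℝ) (hJn : J n = f n)
    (hJ : ∀ k < n, J k = fun ω => max (f k ω) (min (g k ω) ((μ[J (k + 1) | ℱ k]) ω)))
    (ηstar : Ω → ℕ) (hηstar : ηstar = fun ω => sInf ({k | k ≤ n ∧ J k ω = f k ω} ∪ {n}))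
    (ζstar : Ω → ℕ) (hζstar : ζstar = fun ω => sInf ({k | k ≤ n ∧ J k ω = g k ω} ∪ {n})) :
    IsStoppingTime ℱ (fun ω => (ηstar ω : WithTop ℕ)) ∧ IsStoppingTime ℱ (fun ω => (ζstar ω : WithTop ℕ)) ∧
    ∀ ζ η : Ω → ℕ, IsStoppingTime ℱ (fun ω => (ζ ω : WithTop ℕ)) → (∀ ω, ζ ω ≤ n) →
      IsStoppingTime ℱ (fun ω => (η ω : WithTop ℕ)) → (∀ ω, η ω ≤ n) →
      (∫ ω, (if ζstar ω < η ω then g (ζstar ω) ω else f (η ω) ω) ∂μ)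
          ≤ ∫ ω, J 0 ω ∂μ ∧
        (∫ ω, J 0 ω ∂μ)
          ≤ ∫ ω, (if ζ ω < ηstar ω then g (ζ ω) ω else f (ηstar ω) ω) ∂μ := by
  have hJv : IsDynkinValue μ ℱ n f g J := ⟨hJn, hJ⟩
  have hstop (h : ℕ → Ω → ℝ) (hh : ∀ k, Measurable[ℱ k] (h k)) :
      IsStoppingTime ℱ (fun ω => ((firstTimeUpTo n fun k => J k ω = h k ω) : WithTop ℕ)) :=
    isStoppingTime_firstTimeUpTo fun k hk => measurableSet_eq_fun (hJv.measurable hfa hga hk) (hh k)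
  subst hηstar hζstar
  exact ⟨hstop f hfa, hstop g hga, fun ζ η hζ hζn hη hηn =>
    ⟨hJv.integral_payoff_le_integral_value hfi hgi hfg (hstop g hga) hη hηn,
      hJv.integral_value_le_integral_payoff hfi hgi hfg (hstop f hfa) hζ hζn⟩⟩

/-- Discrete Dynkin game as in Statement 11, with
`η* = min(n, min{k : J_k = f_k})` and `ζ* = min(n, min{k : J_k = g_k})` (each `n`
if the corresponding set is empty). Then `η*`, `ζ*` are stopping times and for all
stopping times `ζ, η` with values in `{0,…,n}`:
`E[H(ζ*, η)] ≤ E[J₀] ≤ E[H(ζ, η*)]`, so `(ζ*, η*)` is a saddle point. -/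
theorem stmt12 {Ω : Type*} {m0 : MeasurableSpace Ω} (μ : Measure Ω)
    [IsProbabilityMeasure μ]
    (ℱ : Filtration ℕ m0) (n : ℕ)
    (htrivial : ∀ s : Set Ω, MeasurableSet[ℱ 0] s → μ s = 0 ∨ μ s = 1)
    (f g : ℕ → Ω → ℝ)
    (hfa : ∀ k, Measurable[ℱ k] (f k)) (hga : ∀ k, Measurable[ℱ k] (g k))
    (hfi : ∀ k, Integrable (f k) μ) (hgi : ∀ k, Integrable (g k) μ)
    (hfg : ∀ k, ∀ᵐ ω ∂μ, f k ω ≤ g k ω)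
    (J : ℕ → Ω → ℝ) (hJn : J n = f n)
    (hJ : ∀ k < n, J k = fun ω => max (f k ω) (min (g k ω) ((μ[J (k + 1) | ℱ k]) ω)))
    (ηstar : Ω → ℕ) (hηstar : ηstar = fun ω => sInf ({k | k ≤ n ∧ J k ω = f k ω} ∪ {n}))
    (ζstar : Ω → ℕ) (hζstar : ζstar = fun ω => sInf ({k | k ≤ n ∧ J k ω = g k ω} ∪ {n})) :
    IsStoppingTime ℱ (fun ω => (ηstar ω : WithTop ℕ)) ∧ IsStoppingTime ℱ (fun ω => (ζstar ω : WithTop ℕ)) ∧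
    ∀ ζ η : Ω → ℕ, IsStoppingTime ℱ (fun ω => (ζ ω : WithTop ℕ)) → (∀ ω, ζ ω ≤ n) →
      IsStoppingTime ℱ (fun ω => (η ω : WithTop ℕ)) → (∀ ω, η ω ≤ n) →
      (∫ ω, (if ζstar ω < η ω then g (ζstar ω) ω else f (η ω) ω) ∂μ)
          ≤ ∫ ω, J 0 ω ∂μ ∧
        (∫ ω, J 0 ω ∂μ)
          ≤ ∫ ω, (if ζ ω < ηstar ω then g (ζ ω) ω else f (ηstar ω) ω) ∂μ :=
  stmt12_general μ ℱ n f g hfa hga hfi hgi hfg J hJn hJ ηstar hηstar ζstar hζstar
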